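/- arXiv:2109.11282 — 4 statements merged into one kernel-verified Lean document; each statement's English description precedes it below -/
import Mathlib

section
/- Let (Ω, ℙ) be a probability space, 𝒳 a measurable space, X : Ω → 𝒳, and Y*, M : Ω → {0,1} random variables such that M is independent of the pair (X, Y*), ℙ(M = 1) = p ∈ (0,1], and Y := M · Y*. Let k ∈ ℕ and f* : {0,1} × 𝒳 → ℝ^k be measurable with f*(Y*, X) and (PS_p f*)(Y, X) integrable. Then 𝔼[f*(Y*, X)] = 𝔼[(PS_p f*)(Y, X)]. -/
open MeasureTheory ProbabilityTheory

/-- Propensity-scoring operator for (possibly vector-valued) losses on binary labels: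
`(PS p f)(y, z) = (y/p) • (f 1 z + (p-1) • f 0 z) + (1-y) • f 0 z`. -/
noncomputable def PS {𝒳 V : Type*} [AddCommGroup V] [Module ℝ V]
    (p : ℝ) (f : ℝ → 𝒳 → V) : ℝ → 𝒳 → V :=
  fun y z => (y / p) • (f 1 z + (p - 1) • f 0 z) + (1 - y) • f 0 z

/-!
On binary labels `f y x = f 0 x + y • (f 1 x - f 0 x)`, while for every `y`
`PS p f y x = f 0 x + (y / p) • (f 1 x - f 0 x)`. Hence the two estimates differ by
`(M / p - 1) • G (X, Y*)` with `G (x, y) := y • (f 1 x - f 0 x)`. The weight `M / p - 1` has mean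
zero because `𝔼 M = p`, and it is independent of `G (X, Y*)`, so the difference has mean zero.
-/

section Algebra

variable {𝒳 V : Type*} [AddCommGroup V] [Module ℝ V]

theorem PS_apply_eq {p : ℝ} (hp : p ≠ 0) (f : ℝ → 𝒳 → V) (y : ℝ) (z : 𝒳) :
    PS p f y z = f 0 z + (y / p) • (f 1 z - f 0 z) := by
  simp only [PS]
  match_scalars
  · field_simp
  · field_simp; ring

theorem apply_eq_of_eq_zero_or_eq_one (f : ℝ → 𝒳 → V) {y : ℝ} (hy : y = 0 ∨ y = 1) (z : 𝒳) :
    f y z = f 0 z + y • (f 1 z - f 0 z) := by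
  rcases hy with rfl | rfl <;> simp

theorem PS_mul_sub_apply_of_eq_zero_or_eq_one {p : ℝ} (hp : p ≠ 0) (f : ℝ → 𝒳 → V)
    (m : ℝ) {y : ℝ} (hy : y = 0 ∨ y = 1) (z : 𝒳) :
    PS p f (m * y) z - f y z = (m / p - 1) • (y • (f 1 z - f 0 z)) := by
  rw [PS_apply_eq hp, apply_eq_of_eq_zero_or_eq_one f hy, smul_smul]
  match_scalars <;> ring

end Algebra

theorem integral_eq_measureReal_of_eq_zero_or_eq_one {Ω : Type*} [MeasurableSpace Ω]
    {μ : Measure Ω} {M : Ω → ℝ} (hM : Measurable M) (hM01 : ∀ ω, M ω = 0 ∨ M ω = 1) :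
    ∫ ω, M ω ∂μ = μ.real {ω | M ω = 1} := by
  refine Eq.trans ?_ (integral_indicator_one (hM (measurableSet_singleton 1)))
  congr 1
  funext ω
  rcases hM01 ω with h | h <;> simp [h]

/-- **Unbiased estimates with missing binary labels.**
Under the binary masking model (`M` independent of `(X, Y*)`, `P(M = 1) = p ∈ (0,1]`,
`Y := M · Y*`), for any measurable `f* : {0,1} × 𝒳 → ℝ^k` with the relevant compositions
integrable, `𝔼[f*(Y*, X)] = 𝔼[(PS_p f*)(Y, X)]`. -/
theorem unbiased_binary_estimate
    {Ω : Type*} [MeasurableSpace Ω] (P : Measure Ω) [IsProbabilityMeasure P]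
    {𝒳 : Type*} [MeasurableSpace 𝒳]
    (X : Ω → 𝒳) (Ystar M : Ω → ℝ)
    (hX : Measurable X) (hYstar : Measurable Ystar) (hM : Measurable M)
    (hYstar01 : ∀ ω, Ystar ω = 0 ∨ Ystar ω = 1)
    (hM01 : ∀ ω, M ω = 0 ∨ M ω = 1)
    (p : ℝ) (hp : p ∈ Set.Ioc (0 : ℝ) 1)
    (hindep : IndepFun (fun ω => (X ω, Ystar ω)) M P)
    (hMp : P {ω | M ω = 1} = ENNReal.ofReal p)
    (k : ℕ) (f : ℝ → 𝒳 → EuclideanSpace ℝ (Fin k))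
    (hf : Measurable (Function.uncurry f))
    (hint_true : Integrable (fun ω => f (Ystar ω) (X ω)) P)
    (hint_obs : Integrable (fun ω => PS p f (M ω * Ystar ω) (X ω)) P) :
    ∫ ω, f (Ystar ω) (X ω) ∂P = ∫ ω, PS p f (M ω * Ystar ω) (X ω) ∂P := by
  have hp0 : p ≠ 0 := hp.1.ne'
  set G : 𝒳 × ℝ → EuclideanSpace ℝ (Fin k) := fun q => q.2 • (f 1 q.1 - f 0 q.1)
  have hG : Measurable G := measurable_snd.smul
    ((hf.comp (measurable_const.prodMk measurable_fst)).sub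
      (hf.comp (measurable_const.prodMk measurable_fst)))
  have hdiff : (fun ω => PS p f (M ω * Ystar ω) (X ω) - f (Ystar ω) (X ω)) =
      fun ω => (M ω / p - 1) • G (X ω, Ystar ω) := funext fun ω =>
    PS_mul_sub_apply_of_eq_zero_or_eq_one hp0 f (M ω) (hYstar01 ω) (X ω)
  have hEM : ∫ ω, M ω ∂P = p := by
    rw [integral_eq_measureReal_of_eq_zero_or_eq_one hM hM01, measureReal_def, hMp,
      ENNReal.toReal_ofReal hp.1.le]
  have hM_int : Integrable M P := Integrable.of_bound hM.aestronglyMeasurable 1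
    (Filter.Eventually.of_forall fun ω => by rcases hM01 ω with hω | hω <;> simp [hω])
  have hweight_mean : ∫ ω, (M ω / p - 1) ∂P = 0 := by
    rw [integral_sub (hM_int.div_const p) (integrable_const 1), integral_div, hEM,
      div_self hp0, integral_const, probReal_univ, one_smul, sub_self]
  have hweight_indep : IndepFun (fun ω => M ω / p - 1) (fun ω => G (X ω, Ystar ω)) P :=
    (hindep.comp (ψ := fun m => m / p - 1) hG (by fun_prop)).symm
  have hdiff_mean : ∫ ω, (M ω / p - 1) • G (X ω, Ystar ω) ∂P = 0 := by
    rw [hweight_indep.integral_fun_smul_eq_smul_integral (by fun_prop)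
      (hG.comp (hX.prodMk hYstar)).aestronglyMeasurable, hweight_mean, zero_smul]
  rw [eq_comm, ← sub_eq_zero, ← integral_sub hint_obs hint_true, hdiff, hdiff_mean]
end

section
/- Let (Ω, ℙ) carry the multilabel masking model with l labels and propensities p₁,…,p_l ∈ (0,1], and let f* : {0,1}^l × 𝒳 → ℝ be measurable. Define f : {0,1}^l × 𝒳 → ℝ by f(y, x) := (∏_{i ∈ I(y)} 1/p_i) · Σ_{𝒥 ⊆ I(y)} f*(𝟙_𝒥, x) · ∏_{j ∈ I(y) \ 𝒥} (p_j − 1), where 𝟙_𝒥 ∈ {0,1}^l is the indicator vector of the subset 𝒥 ⊆ {1,…,l} and the sum runs over all subsets 𝒥 of I(y). Then, assuming all expectations exist, 𝔼[f(Y, X)] = 𝔼[f*(Y*, X)]. -/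
open MeasureTheory ProbabilityTheory

/-- The set of positive labels `I(y) = {i : yᵢ = 1}` of a label vector `y ∈ {0,1}^l`. -/
noncomputable def posSet {l : ℕ} (y : Fin l → ℝ) : Finset (Fin l) :=
  Finset.univ.filter (fun i => y i = 1)

/-- The indicator vector `𝟙_𝒥 ∈ {0,1}^l` of a subset `𝒥 ⊆ {1,…,l}`. -/
def indVec {l : ℕ} (J : Finset (Fin l)) : Fin l → ℝ := fun i => if i ∈ J then 1 else 0

/-- The propensity-scored version of a general multilabel loss:
`f(y, x) = (∏_{i ∈ I(y)} 1/pᵢ) · Σ_{𝒥 ⊆ I(y)} f*(𝟙_𝒥, x) · ∏_{j ∈ I(y) \ 𝒥} (pⱼ − 1)`. -/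
noncomputable def psML {l : ℕ} {𝒳 : Type*} (p : Fin l → ℝ)
    (fstar : (Fin l → ℝ) → 𝒳 → ℝ) : (Fin l → ℝ) → 𝒳 → ℝ :=
  fun y x => (∏ i ∈ posSet y, (p i)⁻¹) *
    ∑ J ∈ (posSet y).powerset, fstar (indVec J) x * ∏ j ∈ posSet y \ J, (p j - 1)

/-!
Since `(X, Y*)` is independent of `M`, Fubini reduces the claim to a fixed `x` and a fixed
`y = 𝟙_s`, averaging over the mask alone. Then `M ⊙ y = 𝟙_K` for the random set `K ⊆ s` of
unmasked positive labels, and `K` takes a given value with probability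
`∏_{i ∈ K} pᵢ · ∏_{i ∈ s \ K} (1 - pᵢ)`. In the average of `f(𝟙_K, x)` against these weights the
factors `∏_{i ∈ K} pᵢ` cancel the inverse propensities, and exchanging the sums over
`J ⊆ K ⊆ s` leaves `Σ_{J ⊆ s} f*(𝟙_J, x) · ∏_{i ∈ s \ J} ((pᵢ - 1) + (1 - pᵢ))`, in which only
the term `J = s` survives.
-/

open Finset

section Algebra

variable {α R : Type*} [DecidableEq α]

theorem Finset.inter_eq_iff_forall_mem_iff {s t K : Finset α} (hK : K ⊆ s) :
    t ∩ s = K ↔ ∀ i ∈ s, (i ∈ t ↔ i ∈ K) := by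
  simp only [Finset.ext_iff, mem_inter]
  exact ⟨fun h i hi => by simpa [hi] using h i, fun h i => by
    by_cases hi : i ∈ s
    · simpa [hi] using h i hi
    · simp only [hi, and_false, false_iff]
      exact fun hiK => hi (hK hiK)⟩

theorem sum_Icc_prod_sdiff_mul_prod_sdiff [CommSemiring R] {J s : Finset α} (h : J ⊆ s)
    (a b : α → R) :
    ∑ K ∈ Icc J s, (∏ i ∈ K \ J, a i) * ∏ i ∈ s \ K, b i = ∏ i ∈ s \ J, (a i + b i) := by
  have hcancel : ∀ t ∈ (s \ J).powerset, (J ∪ t) \ J = t := fun t ht =>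
    union_sdiff_cancel_left (disjoint_of_subset_right (mem_powerset.1 ht) disjoint_sdiff)
  rw [prod_add, Icc_eq_image_powerset h, sum_image fun t ht u hu htu => by
    rw [← hcancel t ht, ← hcancel u hu, htu]]
  refine sum_congr rfl fun t ht => ?_
  rw [hcancel t ht, sdiff_sdiff_left]
  rfl

def bernoulliWeight [CommRing R] (p : α → R) (s K : Finset α) : R :=
  (∏ i ∈ K, p i) * ∏ i ∈ s \ K, (1 - p i)

def propensityScore [Field R] (p : α → R) (g : Finset α → R) (K : Finset α) : R :=
  (∏ i ∈ K, (p i)⁻¹) * ∑ J ∈ K.powerset, g J * ∏ j ∈ K \ J, (p j - 1)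

theorem sum_bernoulliWeight_mul_propensityScore [Field R] {p : α → R} {s : Finset α}
    (hp : ∀ i ∈ s, p i ≠ 0) (g : Finset α → R) :
    ∑ K ∈ s.powerset, bernoulliWeight p s K * propensityScore p g K = g s := by
  calc ∑ K ∈ s.powerset, bernoulliWeight p s K * propensityScore p g K
      = ∑ K ∈ s.powerset, ∑ J ∈ K.powerset,
          g J * ((∏ j ∈ K \ J, (p j - 1)) * ∏ i ∈ s \ K, (1 - p i)) := by
        refine sum_congr rfl fun K hK => ?_
        have hinv : (∏ i ∈ K, p i) * ∏ i ∈ K, (p i)⁻¹ = 1 := by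
          rw [← prod_mul_distrib]
          exact prod_eq_one fun i hi => mul_inv_cancel₀ (hp i (mem_powerset.1 hK hi))
        rw [bernoulliWeight, propensityScore, mul_sum, mul_sum]
        refine sum_congr rfl fun J _ => ?_
        linear_combination (g J * (∏ j ∈ K \ J, (p j - 1)) * ∏ i ∈ s \ K, (1 - p i)) * hinv
    _ = ∑ J ∈ s.powerset, g J * ∑ K ∈ Icc J s,
          (∏ j ∈ K \ J, (p j - 1)) * ∏ i ∈ s \ K, (1 - p i) := by
        simp_rw [mul_sum]
        exact sum_comm' fun K J => by simp only [mem_powerset, mem_Icc]; tauto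
    _ = ∑ J ∈ s.powerset, g J * ∏ i ∈ s \ J, (0 : R) := by
        refine sum_congr rfl fun J hJ => ?_
        rw [sum_Icc_prod_sdiff_mul_prod_sdiff (mem_powerset.1 hJ)]
        simp only [sub_add_sub_cancel', sub_self]
    _ = g s := by
        rw [sum_eq_single_of_mem s (mem_powerset_self s), Finset.sdiff_self, prod_empty, mul_one]
        intro J hJ hne
        obtain ⟨i, hi⟩ : (s \ J).Nonempty :=
          sdiff_nonempty.2 fun hsJ => hne (subset_antisymm (mem_powerset.1 hJ) hsJ)
        rw [prod_eq_zero hi rfl, mul_zero]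

end Algebra

section Probability

variable {Ω : Type*} [MeasurableSpace Ω] {P : Measure Ω}

theorem integral_comp_eq_sum_measureReal_mul [IsFiniteMeasure P] {α : Type*} [MeasurableSpace α]
    [MeasurableSingletonClass α] {S : Ω → α} (hS : Measurable S) {t : Finset α}
    (hSt : ∀ ω, S ω ∈ t) (c : α → ℝ) :
    ∫ ω, c (S ω) ∂P = ∑ a ∈ t, P.real (S ⁻¹' {a}) * c a := by
  have hfiber : ∀ a, MeasurableSet (S ⁻¹' {a}) := fun a => hS (measurableSet_singleton a)
  have hsplit : (fun ω => c (S ω)) = fun ω => ∑ a ∈ t, (S ⁻¹' {a}).indicator (fun _ => c a) ω := by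
    funext ω
    rw [sum_eq_single_of_mem (f := fun a => (S ⁻¹' {a}).indicator (fun _ => c a) ω) (S ω) (hSt ω)
      fun a _ ha => Set.indicator_of_notMem (Ne.symm ha) _]
    exact (Set.indicator_of_mem (Set.mem_preimage.2 rfl) (fun _ => c (S ω))).symm
  rw [hsplit, integral_finsetSum _ fun a _ => (integrable_const _).indicator (hfiber a)]
  simp only [integral_indicator_const _ (hfiber _), smul_eq_mul]

theorem ProbabilityTheory.iIndepFun.measureReal_forall_mem_iff_mem [IsProbabilityMeasure P]
    {ι β : Type*} [DecidableEq ι] [MeasurableSpace β] {Z : ι → Ω → β} (hZ : iIndepFun Z P)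
    (hZm : ∀ i, Measurable (Z i)) {B : Set β} (hB : MeasurableSet B) {s K : Finset ι} (hK : K ⊆ s) :
    P.real {ω | ∀ i ∈ s, (Z i ω ∈ B ↔ i ∈ K)}
      = bernoulliWeight (fun i => P.real (Z i ⁻¹' B)) s K := by
  have hevent : {ω | ∀ i ∈ s, (Z i ω ∈ B ↔ i ∈ K)} = ⋂ i ∈ s, Z i ⁻¹' {b | b ∈ B ↔ i ∈ K} := by
    ext ω; simp
  have hmeas : ∀ i, MeasurableSet {b : β | b ∈ B ↔ i ∈ K} := fun i => by
    by_cases hi : i ∈ K <;> simp only [hi, iff_true, iff_false]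
    exacts [hB, hB.compl]
  rw [hevent, measureReal_def, hZ.meas_biInter fun i _ => ⟨_, hmeas i, rfl⟩, ENNReal.toReal_prod,
    ← prod_sdiff hK, bernoulliWeight, mul_comm]
  congr 1
  · exact prod_congr rfl fun i hi => by simp [measureReal_def, hi]
  · refine prod_congr rfl fun i hi => ?_
    have hcompl : Z i ⁻¹' {b | b ∈ B ↔ i ∈ K} = (Z i ⁻¹' B)ᶜ := by
      ext ω; simp [(mem_sdiff.1 hi).2]
    rw [← measureReal_def, hcompl, probReal_compl_eq_one_sub (hZm i hB)]

theorem ProbabilityTheory.IndepFun.integral_comp_eq_integral_integral [IsFiniteMeasure P]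
    {α β : Type*} [MeasurableSpace α] [MeasurableSpace β] {U : Ω → α} {V : Ω → β}
    (hUV : IndepFun U V P) (hU : Measurable U) (hV : Measurable V) {F : α × β → ℝ}
    (hF : Measurable F)
    (hint : Integrable (fun ω => F (U ω, V ω)) P) :
    ∫ ω, F (U ω, V ω) ∂P = ∫ ω, ∫ ω', F (U ω, V ω') ∂P ∂P := by
  have hlaw := hUV.map_prod_eq_prod_map_map hU.aemeasurable hV.aemeasurable
  have hUVm : Measurable fun ω => (U ω, V ω) := hU.prodMk hV
  have hint' : Integrable F ((P.map U).prod (P.map V)) := by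
    rw [← hlaw]
    exact (integrable_map_measure hF.aestronglyMeasurable hUVm.aemeasurable).2 hint
  calc ∫ ω, F (U ω, V ω) ∂P
      = ∫ q, F q ∂(P.map U).prod (P.map V) := by
        rw [← hlaw, integral_map hUVm.aemeasurable hF.aestronglyMeasurable]
    _ = ∫ a, ∫ b, F (a, b) ∂P.map V ∂P.map U := integral_prod F hint'
    _ = ∫ ω, ∫ b, F (U ω, b) ∂P.map V ∂P :=
        integral_map hU.aemeasurable
          hF.stronglyMeasurable.integral_prod_right'.aestronglyMeasurable
    _ = ∫ ω, ∫ ω', F (U ω, V ω') ∂P ∂P := by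
        congr 1 with ω
        exact integral_map hV.aemeasurable (hF.comp measurable_prodMk_left).aestronglyMeasurable

end Probability

section Multilabel

variable {l : ℕ}

theorem mem_posSet {y : Fin l → ℝ} {i : Fin l} : i ∈ posSet y ↔ y i = 1 := by
  simp [posSet]

theorem posSet_indVec (J : Finset (Fin l)) : posSet (indVec J) = J := by
  ext i
  by_cases hi : i ∈ J <;> simp [mem_posSet, indVec, hi]

theorem indVec_posSet {y : Fin l → ℝ} (hy : ∀ i, y i = 0 ∨ y i = 1) : indVec (posSet y) = y := by
  funext i
  rcases hy i with h | h <;> simp [indVec, mem_posSet, h]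

theorem posSet_mul_indVec (m : Fin l → ℝ) (s : Finset (Fin l)) :
    posSet (fun i => m i * indVec s i) = posSet m ∩ s := by
  ext i
  by_cases hi : i ∈ s <;> simp [mem_posSet, indVec, hi]

theorem measurable_posSet : Measurable (posSet : (Fin l → ℝ) → Finset (Fin l)) :=
  measurable_finset_iff.2 fun i => by
    simpa only [mem_posSet] using (measurable_pi_apply i).eq_const 1

theorem psML_eq_propensityScore {𝒳 : Type*} (p : Fin l → ℝ) (fstar : (Fin l → ℝ) → 𝒳 → ℝ)
    (y : Fin l → ℝ) (x : 𝒳) :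
    psML p fstar y x = propensityScore p (fun J => fstar (indVec J) x) (posSet y) :=
  rfl

theorem measurable_psML {𝒳 : Type*} [MeasurableSpace 𝒳] (p : Fin l → ℝ)
    {fstar : (Fin l → ℝ) → 𝒳 → ℝ} (hf : Measurable (Function.uncurry fstar)) :
    Measurable fun q : 𝒳 × (Fin l → ℝ) => psML p fstar q.2 q.1 := by
  have hscore : ∀ K : Finset (Fin l),
      Measurable fun x => propensityScore p (fun J => fstar (indVec J) x) K := fun K => by
    have hslice : ∀ v, Measurable (fstar v) := fun v => hf.comp measurable_prodMk_left
    unfold propensityScore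
    fun_prop
  exact (measurable_from_prod_countable_left (f := fun r : 𝒳 × Finset (Fin l) =>
    propensityScore p (fun J => fstar (indVec J) r.1) r.2) hscore).comp
    (measurable_fst.prodMk (measurable_posSet.comp measurable_snd))

theorem integral_psML_mask {Ω 𝒳 : Type*} [MeasurableSpace Ω] {P : Measure Ω}
    [IsProbabilityMeasure P] {M : Ω → Fin l → ℝ} {p : Fin l → ℝ} (hM : Measurable M)
    (hMindep : iIndepFun (fun i ω => M ω i) P) (hMp : ∀ i, P.real {ω | M ω i = 1} = p i)
    (hp : ∀ i, p i ≠ 0) (fstar : (Fin l → ℝ) → 𝒳 → ℝ) (x : 𝒳) {y : Fin l → ℝ}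
    (hy : ∀ i, y i = 0 ∨ y i = 1) :
    ∫ ω, psML p fstar (fun i => M ω i * y i) x ∂P = fstar y x := by
  obtain ⟨s, rfl⟩ : ∃ s, y = indVec s := ⟨posSet y, (indVec_posSet hy).symm⟩
  set S : Ω → Finset (Fin l) := fun ω => posSet (M ω) ∩ s
  have hMi : ∀ i, Measurable fun ω => M ω i := fun i => (measurable_pi_apply i).comp hM
  have hS : Measurable S := measurable_finset_iff.2 fun i => by
    simpa only [S, mem_inter, mem_posSet] using ((hMi i).eq_const 1).and measurable_const
  have hlaw : ∀ K ∈ s.powerset, P.real (S ⁻¹' {K}) = bernoulliWeight p s K := fun K hK => by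
    have hevent : S ⁻¹' {K} = {ω | ∀ i ∈ s, (M ω i ∈ ({1} : Set ℝ) ↔ i ∈ K)} := by
      ext ω
      simp [S, inter_eq_iff_forall_mem_iff (mem_powerset.1 hK), mem_posSet]
    rw [hevent, hMindep.measureReal_forall_mem_iff_mem hMi (measurableSet_singleton 1)
      (mem_powerset.1 hK)]
    exact congrArg (bernoulliWeight · s K) (funext hMp)
  calc ∫ ω, psML p fstar (fun i => M ω i * indVec s i) x ∂P
      = ∫ ω, propensityScore p (fun J => fstar (indVec J) x) (S ω) ∂P := by
        simp only [psML_eq_propensityScore, posSet_mul_indVec, S]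
    _ = ∑ K ∈ s.powerset,
          P.real (S ⁻¹' {K}) * propensityScore p (fun J => fstar (indVec J) x) K :=
        integral_comp_eq_sum_measureReal_mul hS (fun ω => mem_powerset.2 inter_subset_right) _
    _ = fstar (indVec s) x := by
        rw [sum_congr rfl fun K hK => by rw [hlaw K hK]]
        exact sum_bernoulliWeight_mul_propensityScore (fun i _ => hp i) _

end Multilabel

theorem unbiased_general_multilabel_general
    {Ω : Type*} [MeasurableSpace Ω] (P : Measure Ω) [IsProbabilityMeasure P]
    {𝒳 : Type*} [MeasurableSpace 𝒳]
    (l : ℕ) (X : Ω → 𝒳) (Ystar M : Ω → Fin l → ℝ)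
    (hX : Measurable X) (hYstar : Measurable Ystar) (hM : Measurable M)
    (hYstar01 : ∀ ω i, Ystar ω i = 0 ∨ Ystar ω i = 1)
    (p : Fin l → ℝ) (hp : ∀ i, p i ∈ Set.Ioc (0 : ℝ) 1)
    (hMindep : iIndepFun
      (fun i ω => M ω i) P)
    (hindep : IndepFun (fun ω => (X ω, Ystar ω)) M P)
    (hMp : ∀ i, P {ω | M ω i = 1} = ENNReal.ofReal (p i))
    (fstar : (Fin l → ℝ) → 𝒳 → ℝ) (hf : Measurable (Function.uncurry fstar))
    (hint_obs : Integrable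
      (fun ω => psML p fstar (fun i => M ω i * Ystar ω i) (X ω)) P) :
    ∫ ω, psML p fstar (fun i => M ω i * Ystar ω i) (X ω) ∂P
      = ∫ ω, fstar (Ystar ω) (X ω) ∂P := by
  have hMreal : ∀ i, P.real {ω | M ω i = 1} = p i := fun i => by
    rw [measureReal_def, hMp i, ENNReal.toReal_ofReal (hp i).1.le]
  have hF : Measurable fun q : (𝒳 × (Fin l → ℝ)) × (Fin l → ℝ) =>
      psML p fstar (fun i => q.2 i * q.1.2 i) q.1.1 :=
    (measurable_psML p hf).comp
      (f := fun q : (𝒳 × (Fin l → ℝ)) × (Fin l → ℝ) => (q.1.1, fun i => q.2 i * q.1.2 i))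
      (by fun_prop)
  calc ∫ ω, psML p fstar (fun i => M ω i * Ystar ω i) (X ω) ∂P
      = ∫ ω, ∫ ω', psML p fstar (fun i => M ω' i * Ystar ω i) (X ω) ∂P ∂P :=
        hindep.integral_comp_eq_integral_integral (hX.prodMk hYstar) hM hF hint_obs
    _ = ∫ ω, fstar (Ystar ω) (X ω) ∂P := by
        refine integral_congr_ae (ae_of_all _ fun ω => ?_)
        exact integral_psML_mask hM hMindep hMreal (fun i => (hp i).1.ne') fstar (X ω) (hYstar01 ω)

/-- **Unbiased estimate for general multilabel losses.** Under the multilabel masking model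
with `l` labels and propensities `p i ∈ (0,1]` (mask coordinates mutually independent and
jointly independent of `(X, Y*)`), for any measurable `f* : {0,1}^l × 𝒳 → ℝ` one has
`𝔼[f(Y, X)] = 𝔼[f*(Y*, X)]` where `f = psML p f*` and `Y = M ⊙ Y*`. -/
theorem unbiased_general_multilabel
    {Ω : Type*} [MeasurableSpace Ω] (P : Measure Ω) [IsProbabilityMeasure P]
    {𝒳 : Type*} [MeasurableSpace 𝒳]
    (l : ℕ) (X : Ω → 𝒳) (Ystar M : Ω → Fin l → ℝ)
    (hX : Measurable X) (hYstar : Measurable Ystar) (hM : Measurable M)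
    (hYstar01 : ∀ ω i, Ystar ω i = 0 ∨ Ystar ω i = 1)
    (hM01 : ∀ ω i, M ω i = 0 ∨ M ω i = 1)
    (p : Fin l → ℝ) (hp : ∀ i, p i ∈ Set.Ioc (0 : ℝ) 1)
    (hMindep : iIndepFun
      (fun i ω => M ω i) P)
    (hindep : IndepFun (fun ω => (X ω, Ystar ω)) M P)
    (hMp : ∀ i, P {ω | M ω i = 1} = ENNReal.ofReal (p i))
    (fstar : (Fin l → ℝ) → 𝒳 → ℝ) (hf : Measurable (Function.uncurry fstar))
    (hint_obs : Integrable
      (fun ω => psML p fstar (fun i => M ω i * Ystar ω i) (X ω)) P)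
    (hint_true : Integrable (fun ω => fstar (Ystar ω) (X ω)) P) :
    ∫ ω, psML p fstar (fun i => M ω i * Ystar ω i) (X ω) ∂P
      = ∫ ω, fstar (Ystar ω) (X ω) ∂P :=
  unbiased_general_multilabel_general P l X Ystar M hX hYstar hM hYstar01 p hp hMindep hindep hMp
    fstar hf hint_obs
end

section
/- Let l ∈ ℕ, p₁,…,p_l ∈ (0,1) (strictly), and y, ŷ ∈ {0,1}^l. Set S := I(y) ∩ I(ŷ) and T := I(y) \ S. Then the unbiased estimate of per-example recall, (∏_{i ∈ I(y)} 1/p_i) · Σ_{𝒥 ⊆ I(y)} (|𝒥|⁻¹ Σ_{k ∈ 𝒥} ŷ_k) · ∏_{j ∈ I(y) \ 𝒥} (p_j − 1) (with the 𝒥 = ∅ summand equal to 0), equals the rearranged form ∏_{i ∈ I(y)} ((p_i − 1)/p_i) · Σ_{s=1}^{|S|} Σ_{𝒦 ⊆ S, |𝒦| = s} (∏_{k ∈ 𝒦} 1/(p_k − 1)) · s · Σ_{𝒥 ⊆ T} (∏_{j ∈ 𝒥} (p_j − 1)⁻¹) / (|𝒥| + s). -/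
open Finset

lemma sum_powerset_union' {α M : Type*} [DecidableEq α] [AddCommMonoid M]
    (S T : Finset α) (h : Disjoint S T) (f : Finset α → M) :
    ∑ J ∈ (S ∪ T).powerset, f J = ∑ K ∈ S.powerset, ∑ J ∈ T.powerset, f (K ∪ J) := by
  classical
  induction S using Finset.induction_on generalizing f with
  | empty => simp
  | @insert a S ha ih =>
    have haT : a ∉ T := disjoint_left.mp h (mem_insert_self a S)
    have haST : a ∉ S ∪ T := by simp [ha, haT]
    have h' : Disjoint S T := h.mono_left (subset_insert a S)
    rw [insert_union, sum_powerset_insert haST, sum_powerset_insert ha,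
      ih h' f, ih h' (fun J => f (insert a J))]
    congr 1
    exact Finset.sum_congr rfl fun K _ => Finset.sum_congr rfl fun J _ => by
      rw [insert_union]


/-- **Rearranged form of the propensity-scored per-example recall.** For strict propensities
`pᵢ ∈ (0,1)` and `y, ŷ ∈ {0,1}^l`, with `S := I(y) ∩ I(ŷ)` and `T := I(y) \ S`, the unbiased
estimate of per-example recall
`(∏_{i ∈ I(y)} 1/pᵢ) · Σ_{𝒥 ⊆ I(y)} (|𝒥|⁻¹ Σ_{k ∈ 𝒥} ŷ_k) · ∏_{j ∈ I(y) \ 𝒥} (pⱼ − 1)`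
equals
`∏_{i ∈ I(y)} ((pᵢ−1)/pᵢ) · Σ_{s=1}^{|S|} Σ_{𝒦 ⊆ S, |𝒦|=s} (∏_{k ∈ 𝒦} 1/(p_k−1)) · s ·
  Σ_{𝒥 ⊆ T} (∏_{j ∈ 𝒥} (pⱼ−1)⁻¹)/(|𝒥|+s)`. -/
theorem ps_recall_rearranged
    (l : ℕ) (p : Fin l → ℝ) (hp : ∀ i, p i ∈ Set.Ioo (0 : ℝ) 1)
    (y yhat : Fin l → ℝ)
    (hy : ∀ i, y i = 0 ∨ y i = 1) (hyhat : ∀ i, yhat i = 0 ∨ yhat i = 1) :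
    (∏ i ∈ posSet y, (p i)⁻¹) *
      ∑ J ∈ (posSet y).powerset,
        ((J.card : ℝ)⁻¹ * ∑ k ∈ J, yhat k) * ∏ j ∈ posSet y \ J, (p j - 1)
    = (∏ i ∈ posSet y, ((p i - 1) / p i)) *
      ∑ s ∈ Finset.Icc 1 (posSet y ∩ posSet yhat).card,
        ∑ K ∈ Finset.powersetCard s (posSet y ∩ posSet yhat),
          (∏ k ∈ K, (p k - 1)⁻¹) * (s : ℝ) *
            ∑ J ∈ (posSet y \ (posSet y ∩ posSet yhat)).powerset,
              (∏ j ∈ J, (p j - 1)⁻¹) / ((J.card : ℝ) + (s : ℝ)) := by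
  classical
  set A := posSet y with hA
  set S := posSet y ∩ posSet yhat with hS
  set T := posSet y \ (posSet y ∩ posSet yhat) with hT
  have hne : ∀ i, p i - 1 ≠ 0 := fun i => sub_ne_zero.mpr (ne_of_lt (hp i).2)
  have hST : Disjoint S T := disjoint_sdiff
  have hUnion : S ∪ T = A := Finset.union_sdiff_of_subset Finset.inter_subset_left
  have hyhS : ∀ k ∈ S, yhat k = 1 := by
    intro k hk
    have := (Finset.mem_inter.mp hk).2
    simpa [posSet] using this
  have hyhT : ∀ j ∈ T, yhat j = 0 := by
    intro j hj
    rcases Finset.mem_sdiff.mp hj with ⟨hjA, hjS⟩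
    rcases hyhat j with h0 | h1
    · exact h0
    · exact absurd (Finset.mem_inter.mpr ⟨hjA, by simp [posSet, h1]⟩) hjS
  -- rewrite the sdiff product
  have hprod : ∀ J ∈ A.powerset, (∏ j ∈ A \ J, (p j - 1))
      = (∏ i ∈ A, (p i - 1)) * ∏ j ∈ J, (p j - 1)⁻¹ := by
    intro J hJ
    have hJA : J ⊆ A := Finset.mem_powerset.mp hJ
    rw [← Finset.prod_sdiff hJA, Finset.prod_inv_distrib, mul_assoc,
      mul_inv_cancel₀ (Finset.prod_ne_zero_iff.mpr fun i _ => hne i), mul_one]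
  have key :
      ∑ J ∈ A.powerset, ((J.card : ℝ)⁻¹ * ∑ k ∈ J, yhat k) * ∏ j ∈ J, (p j - 1)⁻¹
      = ∑ s ∈ Finset.Icc 1 S.card,
          ∑ K ∈ Finset.powersetCard s S,
            (∏ k ∈ K, (p k - 1)⁻¹) * (s : ℝ) *
              ∑ J ∈ T.powerset, (∏ j ∈ J, (p j - 1)⁻¹) / ((J.card : ℝ) + (s : ℝ)) := by
    rw [← hUnion, sum_powerset_union' S T hST, Finset.sum_powerset]
    rw [show ∑ s ∈ Finset.range (S.card + 1), ∑ K ∈ Finset.powersetCard s S,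
          ∑ J ∈ T.powerset, (((K ∪ J).card : ℝ)⁻¹ * ∑ k ∈ K ∪ J, yhat k) *
            ∏ j ∈ K ∪ J, (p j - 1)⁻¹
        = ∑ s ∈ Finset.Icc 1 S.card, ∑ K ∈ Finset.powersetCard s S,
          ∑ J ∈ T.powerset, (((K ∪ J).card : ℝ)⁻¹ * ∑ k ∈ K ∪ J, yhat k) *
            ∏ j ∈ K ∪ J, (p j - 1)⁻¹ from ?_]
    · refine Finset.sum_congr rfl fun s hs => Finset.sum_congr rfl fun K hK => ?_
      obtain ⟨hKS, hKcard⟩ := Finset.mem_powersetCard.mp hK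
      have hs1 : 1 ≤ s := (Finset.mem_Icc.mp hs).1
      rw [Finset.mul_sum]
      refine Finset.sum_congr rfl fun J hJ => ?_
      have hJT : J ⊆ T := Finset.mem_powerset.mp hJ
      have hKJ : Disjoint K J := hST.mono hKS hJT
      have hcard : (K ∪ J).card = s + J.card := by
        rw [Finset.card_union_of_disjoint hKJ, hKcard]
      have hsum : ∑ k ∈ K ∪ J, yhat k = (s : ℝ) := by
        rw [Finset.sum_union hKJ,
          Finset.sum_congr rfl (fun k hk => hyhS k (hKS hk)),
          Finset.sum_congr rfl (fun j hj => hyhT j (hJT hj))]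
        simp [hKcard]
      have hprodU : ∏ j ∈ K ∪ J, (p j - 1)⁻¹
          = (∏ k ∈ K, (p k - 1)⁻¹) * ∏ j ∈ J, (p j - 1)⁻¹ := Finset.prod_union hKJ
      rw [hcard, hsum, hprodU]
      have hden : ((J.card : ℝ) + (s : ℝ)) ≠ 0 := by positivity
      field_simp
      push_cast
      ring
    · symm
      apply Finset.sum_subset
      · intro s hs
        rw [Finset.mem_range]
        exact Nat.lt_succ_of_le (Finset.mem_Icc.mp hs).2
      · intro s hs hns
        have hs0 : s = 0 := by
          rcases Nat.eq_zero_or_pos s with h0 | h1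
          · exact h0
          · exact absurd (Finset.mem_Icc.mpr ⟨h1, Nat.lt_succ_iff.mp (Finset.mem_range.mp hs)⟩) hns
        subst hs0
        simp only [Finset.powersetCard_zero, Finset.sum_singleton, Finset.empty_union]
        refine Finset.sum_eq_zero fun J hJ => ?_
        have hJT : J ⊆ T := Finset.mem_powerset.mp hJ
        have : ∑ k ∈ J, yhat k = 0 :=
          Finset.sum_eq_zero fun j hj => hyhT j (hJT hj)
        simp [this]
  calc (∏ i ∈ A, (p i)⁻¹) *
      ∑ J ∈ A.powerset, ((J.card : ℝ)⁻¹ * ∑ k ∈ J, yhat k) * ∏ j ∈ A \ J, (p j - 1)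
      = (∏ i ∈ A, (p i)⁻¹) * ((∏ i ∈ A, (p i - 1)) *
        ∑ J ∈ A.powerset, ((J.card : ℝ)⁻¹ * ∑ k ∈ J, yhat k) * ∏ j ∈ J, (p j - 1)⁻¹) := by
        have hsum2 : ∑ J ∈ A.powerset, ((J.card : ℝ)⁻¹ * ∑ k ∈ J, yhat k) * ∏ j ∈ A \ J, (p j - 1)
            = ∑ J ∈ A.powerset, (∏ i ∈ A, (p i - 1)) *
                (((J.card : ℝ)⁻¹ * ∑ k ∈ J, yhat k) * ∏ j ∈ J, (p j - 1)⁻¹) :=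
          Finset.sum_congr rfl fun J hJ => by rw [hprod J hJ]; ring
        rw [hsum2, ← Finset.mul_sum]
    _ = (∏ i ∈ A, ((p i - 1) / p i)) *
        ∑ J ∈ A.powerset, ((J.card : ℝ)⁻¹ * ∑ k ∈ J, yhat k) * ∏ j ∈ J, (p j - 1)⁻¹ := by
        rw [← mul_assoc, ← Finset.prod_mul_distrib]
        congr 1
        exact Finset.prod_congr rfl fun i _ => by rw [div_eq_mul_inv]; ring
    _ = _ := by rw [key]
end

section
/- Let (Ω, ℙ) carry the multilabel masking model with l labels and propensities p₁,…,p_l ∈ (0,1]. For i ∈ {1,…,l}, define T̃_i := (Y_i / p_i) / (1 + Σ_{j ≠ i} Y_j / p_j). Then 𝔼[T̃_i] ≥ 𝔼[ Y*_i / (1 + Σ_{j ≠ i} Y*_j) ]; i.e., T̃_i is an upper bound in expectation for the normalized true label T*_i = Y*_i / Σ_{j=1}^l Y*_j. -/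
open MeasureTheory ProbabilityTheory

/-!
Since `Y*` is independent of `M`, it suffices to prove the inequality for a fixed label
vector `y ≥ 0`. The weighted masks `Zⱼ := Mⱼ yⱼ / pⱼ` are then independent, nonnegative, with
mean `yⱼ`, and `Zᵢ` is independent of `S := Σ_{j ≠ i} Zⱼ`. Hence
`𝔼[Zᵢ / (1 + S)] = yᵢ 𝔼[(1 + S)⁻¹] ≥ yᵢ / (1 + 𝔼 S) = yᵢ / (1 + Σ_{j ≠ i} yⱼ)`
by Jensen's inequality for the convex function `x ↦ (1 + x)⁻¹` on `[0, ∞)`.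
-/

open Set

lemma convexOn_inv_one_add : ConvexOn ℝ (Ici 0) fun x : ℝ ↦ (1 + x)⁻¹ := by
  refine (((convexOn_zpow (-1)).translate_right (1 : ℝ)).subset ?_ (convex_Ici 0)).congr ?_
  · intro x (hx : 0 ≤ x)
    show (0 : ℝ) < 1 + x
    linarith
  · intro x _
    simp

lemma norm_div_one_add_le {a s : ℝ} (ha : 0 ≤ a) (hs : 0 ≤ s) : ‖a / (1 + s)‖ ≤ a := by
  have h_one_le : 1 ≤ 1 + s := le_add_of_nonneg_right hs
  rw [Real.norm_of_nonneg (div_nonneg ha (by linarith))]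
  exact div_le_self ha h_one_le

section Probability

variable {Ω : Type*} [MeasurableSpace Ω] {P : Measure Ω}

lemma integral_eq_measureReal_of_eq_zero_or_one {f : Ω → ℝ} (hf : Measurable f)
    (h01 : ∀ ω, f ω = 0 ∨ f ω = 1) : ∫ ω, f ω ∂P = P.real {ω | f ω = 1} := by
  have hf_eq : f = {ω | f ω = 1}.indicator 1 := by
    funext ω
    rcases h01 ω with h | h <;> simp [h]
  calc ∫ ω, f ω ∂P = ∫ ω, {ω | f ω = 1}.indicator 1 ω ∂P := by rw [← hf_eq]
    _ = P.real {ω | f ω = 1} := integral_indicator_one (hf (measurableSet_singleton 1))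

variable [IsProbabilityMeasure P]

lemma inv_one_add_integral_le_integral_inv_one_add {S : Ω → ℝ} (hS : Integrable S P)
    (hS_nonneg : 0 ≤ᵐ[P] S) : (1 + ∫ ω, S ω ∂P)⁻¹ ≤ ∫ ω, (1 + S ω)⁻¹ ∂P := by
  have h_int : Integrable (fun ω ↦ (1 + S ω)⁻¹) P := by
    refine .of_bound (hS.aemeasurable.const_add 1).inv.aestronglyMeasurable 1 ?_
    filter_upwards [hS_nonneg] with ω (hω : 0 ≤ S ω)
    have h_one_le : 1 ≤ 1 + S ω := le_add_of_nonneg_right hω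
    rw [Real.norm_of_nonneg (inv_nonneg.mpr (by linarith))]
    exact inv_le_one_of_one_le₀ h_one_le
  have h_cont : ContinuousOn (fun x : ℝ ↦ (1 + x)⁻¹) (Ici 0) :=
    (continuousOn_const.add continuousOn_id).inv₀ fun x (hx : 0 ≤ x) ↦ by
      simp only [Pi.add_apply, id]
      linarith
  exact convexOn_inv_one_add.map_integral_le h_cont isClosed_Ici hS_nonneg hS h_int

end Probability

namespace ProbabilityTheory

variable {Ω : Type*} [MeasurableSpace Ω] {P : Measure Ω} [IsProbabilityMeasure P]

lemma iIndepFun.integral_div_one_add_sum_integral_le {ι : Type*} {Z : ι → Ω → ℝ}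
    (hZ : iIndepFun Z P) (hZ_int : ∀ j, Integrable (Z j) P) (hZ_nonneg : ∀ j, 0 ≤ᵐ[P] Z j)
    {s : Finset ι} {i : ι} (hi : i ∉ s) :
    (∫ ω, Z i ω ∂P) / (1 + ∑ j ∈ s, ∫ ω, Z j ω ∂P)
      ≤ ∫ ω, Z i ω / (1 + ∑ j ∈ s, Z j ω) ∂P := by
  set S := ∑ j ∈ s, Z j
  have hS_apply : ∀ ω, S ω = ∑ j ∈ s, Z j ω := fun ω ↦ Finset.sum_apply ω s Z
  have hS_int : Integrable S P := integrable_finsetSum' s fun j _ ↦ hZ_int j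
  have hS_nonneg : 0 ≤ᵐ[P] S := by
    filter_upwards [(Filter.eventually_all_finset s).mpr fun j _ ↦ hZ_nonneg j] with ω hω
    rw [Pi.zero_apply, hS_apply]
    exact Finset.sum_nonneg hω
  have hS_mean : ∫ ω, S ω ∂P = ∑ j ∈ s, ∫ ω, Z j ω ∂P := by
    simp only [hS_apply]
    exact integral_finsetSum s fun j _ ↦ hZ_int j
  have h_indep : IndepFun (Z i) (fun ω ↦ (1 + S ω)⁻¹) P :=
    ((hZ.indepFun_finsetSum_of_notMem₀ (fun j ↦ (hZ_int j).aemeasurable) hi).comp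
      (measurable_const.add measurable_id).inv measurable_id).symm
  have h_mean_nonneg : 0 ≤ ∫ ω, Z i ω ∂P := integral_nonneg_of_ae (hZ_nonneg i)
  calc (∫ ω, Z i ω ∂P) / (1 + ∑ j ∈ s, ∫ ω, Z j ω ∂P)
      = (∫ ω, Z i ω ∂P) * (1 + ∫ ω, S ω ∂P)⁻¹ := by rw [hS_mean, div_eq_mul_inv]
    _ ≤ (∫ ω, Z i ω ∂P) * ∫ ω, (1 + S ω)⁻¹ ∂P :=
      mul_le_mul_of_nonneg_left
        (inv_one_add_integral_le_integral_inv_one_add hS_int hS_nonneg) h_mean_nonneg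
    _ = ∫ ω, Z i ω * (1 + S ω)⁻¹ ∂P :=
      (h_indep.integral_fun_mul_eq_mul_integral (hZ_int i).aestronglyMeasurable
        ((hS_int.aemeasurable.const_add 1).inv.aestronglyMeasurable)).symm
    _ = ∫ ω, Z i ω / (1 + ∑ j ∈ s, Z j ω) ∂P := by simp only [hS_apply, div_eq_mul_inv]

lemma IndepFun.integral_le_integral_comp_of_le {α β : Type*} [MeasurableSpace α]
    [MeasurableSpace β] {X : Ω → α} {Y : Ω → β} (hXY : IndepFun X Y P) (hX : Measurable X)
    (hY : Measurable Y) {F : α × β → ℝ} (hF : Measurable F)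
    (hF_int : Integrable (fun ω ↦ F (X ω, Y ω)) P) {G : Ω → ℝ} (hG : Integrable G P)
    (hle : ∀ᵐ ω ∂P, G ω ≤ ∫ ω', F (X ω, Y ω') ∂P) :
    ∫ ω, G ω ∂P ≤ ∫ ω, F (X ω, Y ω) ∂P := by
  have h_map : P.map (fun ω ↦ (X ω, Y ω)) = (P.map X).prod (P.map Y) :=
    hXY.map_prod_eq_prod_map_map hX.aemeasurable hY.aemeasurable
  have h_prod_int : Integrable F ((P.map X).prod (P.map Y)) := by
    rw [← h_map]
    exact (integrable_map_measure hF.aestronglyMeasurable (hX.prodMk hY).aemeasurable).mpr hF_int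
  have h_section : ∀ x, ∫ ω', F (x, Y ω') ∂P = ∫ y, F (x, y) ∂(P.map Y) := fun x ↦
    (integral_map hY.aemeasurable (hF.comp measurable_prodMk_left).aestronglyMeasurable).symm
  have h_outer_int := h_prod_int.integral_prod_left
  calc ∫ ω, G ω ∂P ≤ ∫ ω, ∫ y, F (X ω, y) ∂(P.map Y) ∂P := by
        refine integral_mono_ae hG ?_ ?_
        · exact (integrable_map_measure h_outer_int.aestronglyMeasurable hX.aemeasurable).mp
            h_outer_int
        · filter_upwards [hle] with ω hω
          rwa [← h_section]
    _ = ∫ x, ∫ y, F (x, y) ∂(P.map Y) ∂(P.map X) :=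
      (integral_map hX.aemeasurable h_outer_int.aestronglyMeasurable).symm
    _ = ∫ z, F z ∂(P.map (fun ω ↦ (X ω, Y ω))) := by rw [h_map, integral_prod F h_prod_int]
    _ = ∫ ω, F (X ω, Y ω) ∂P :=
      integral_map (hX.prodMk hY).aemeasurable hF.aestronglyMeasurable

lemma le_integral_mul_div_one_add_sum_mul_div {ι : Type*} {M : Ω → ι → ℝ}
    (hM_indep : iIndepFun (fun j ω ↦ M ω j) P) (hM_nonneg : ∀ j, 0 ≤ᵐ[P] fun ω ↦ M ω j)
    {p : ι → ℝ} (hp : ∀ j, 0 < p j) (hM_mean : ∀ j, ∫ ω, M ω j ∂P = p j)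
    {y : ι → ℝ} (hy : ∀ j, 0 ≤ y j) {s : Finset ι} {i : ι} (hi : i ∉ s) :
    y i / (1 + ∑ j ∈ s, y j)
      ≤ ∫ ω, (M ω i * y i / p i) / (1 + ∑ j ∈ s, M ω j * y j / p j) ∂P := by
  have hM_int : ∀ j, Integrable (fun ω ↦ M ω j) P := fun j ↦
    .of_integral_ne_zero (by rw [hM_mean]; exact (hp j).ne')
  have hZ_mean : ∀ j, ∫ ω, M ω j * y j / p j ∂P = y j := fun j ↦ by
    rw [integral_div, integral_mul_const, hM_mean, mul_div_cancel_left₀ _ (hp j).ne']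
  have hZ_nonneg : ∀ j, 0 ≤ᵐ[P] fun ω ↦ M ω j * y j / p j := fun j ↦ by
    filter_upwards [hM_nonneg j] with ω (hω : 0 ≤ M ω j)
    exact div_nonneg (mul_nonneg hω (hy j)) (hp j).le
  have hZ_indep : iIndepFun (fun j ω ↦ M ω j * y j / p j) P :=
    hM_indep.comp (fun j x ↦ x * y j / p j) fun j ↦ by fun_prop
  simpa only [hZ_mean] using hZ_indep.integral_div_one_add_sum_integral_le
    (fun j ↦ ((hM_int j).mul_const _).div_const _) hZ_nonneg hi

end ProbabilityTheory

theorem normalized_label_upper_bound_general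
    {Ω : Type*} [MeasurableSpace Ω] (P : Measure Ω) [IsProbabilityMeasure P]
    {𝒳 : Type*} [MeasurableSpace 𝒳]
    (l : ℕ) (X : Ω → 𝒳) (Ystar M : Ω → Fin l → ℝ)
    (hYstar : Measurable Ystar) (hM : Measurable M)
    (hYstar01 : ∀ ω i, Ystar ω i = 0 ∨ Ystar ω i = 1)
    (hM01 : ∀ ω i, M ω i = 0 ∨ M ω i = 1)
    (p : Fin l → ℝ) (hp : ∀ i, p i ∈ Set.Ioc (0 : ℝ) 1)
    (hMindep : iIndepFun (m := fun _ : Fin l => (inferInstance : MeasurableSpace ℝ))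
      (fun i ω => M ω i) P)
    (hindep : IndepFun (fun ω => (X ω, Ystar ω)) M P)
    (hMp : ∀ i, P {ω | M ω i = 1} = ENNReal.ofReal (p i))
    (i : Fin l) :
    ∫ ω, Ystar ω i / (1 + ∑ j ∈ Finset.univ.erase i, Ystar ω j) ∂P
      ≤ ∫ ω, (M ω i * Ystar ω i / p i)
          / (1 + ∑ j ∈ Finset.univ.erase i, M ω j * Ystar ω j / p j) ∂P := by
  have hYM : IndepFun Ystar M P := hindep.comp measurable_snd measurable_id
  have hY_mem : ∀ ω j, 0 ≤ Ystar ω j ∧ Ystar ω j ≤ 1 := fun ω j ↦ by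
    rcases hYstar01 ω j with h | h <;> simp [h]
  have hM_mem : ∀ ω j, 0 ≤ M ω j ∧ M ω j ≤ 1 := fun ω j ↦ by
    rcases hM01 ω j with h | h <;> simp [h]
  have hM_mean : ∀ j, ∫ ω, M ω j ∂P = p j := fun j ↦ by
    rw [integral_eq_measureReal_of_eq_zero_or_one (by fun_prop) (hM01 · j), measureReal_def,
      hMp, ENNReal.toReal_ofReal (hp j).1.le]
  have hterm_nonneg : ∀ ω j, 0 ≤ M ω j * Ystar ω j / p j := fun ω j ↦
    div_nonneg (mul_nonneg (hM_mem ω j).1 (hY_mem ω j).1) (hp j).1.le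
  refine hYM.integral_le_integral_comp_of_le hYstar hM (F := fun z ↦
      (z.2 i * z.1 i / p i) / (1 + ∑ j ∈ Finset.univ.erase i, z.2 j * z.1 j / p j))
    (by fun_prop) ?_ ?_ (ae_of_all _ fun ω ↦ ?_)
  · refine .of_bound (Measurable.aestronglyMeasurable (by fun_prop)) (1 / p i)
      (ae_of_all _ fun ω ↦ ?_)
    refine (norm_div_one_add_le (hterm_nonneg ω i)
      (Finset.sum_nonneg fun j _ ↦ hterm_nonneg ω j)).trans ?_
    exact div_le_div_of_nonneg_right (mul_le_one₀ (hM_mem ω i).2 (hY_mem ω i).1 (hY_mem ω i).2)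
      (hp i).1.le
  · refine .of_bound (Measurable.aestronglyMeasurable (by fun_prop)) 1 (ae_of_all _ fun ω ↦ ?_)
    exact (norm_div_one_add_le (hY_mem ω i).1
      (Finset.sum_nonneg fun j _ ↦ (hY_mem ω j).1)).trans (hY_mem ω i).2
  · exact le_integral_mul_div_one_add_sum_mul_div hMindep
      (fun j ↦ ae_of_all _ fun ω ↦ (hM_mem ω j).1) (fun j ↦ (hp j).1) hM_mean
      (fun j ↦ (hY_mem ω j).1) (Finset.notMem_erase i _)

/-- **Upper bound in expectation for normalized labels.** Under the multilabel masking model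
with `l` labels and propensities `p i ∈ (0,1]`, with `Y = M ⊙ Y*` and
`T̃ᵢ := (Yᵢ/pᵢ)/(1 + Σ_{j ≠ i} Yⱼ/pⱼ)`, one has
`𝔼[T̃ᵢ] ≥ 𝔼[Y*ᵢ/(1 + Σ_{j ≠ i} Y*ⱼ)]`. -/
theorem normalized_label_upper_bound
    {Ω : Type*} [MeasurableSpace Ω] (P : Measure Ω) [IsProbabilityMeasure P]
    {𝒳 : Type*} [MeasurableSpace 𝒳]
    (l : ℕ) (X : Ω → 𝒳) (Ystar M : Ω → Fin l → ℝ)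
    (hX : Measurable X) (hYstar : Measurable Ystar) (hM : Measurable M)
    (hYstar01 : ∀ ω i, Ystar ω i = 0 ∨ Ystar ω i = 1)
    (hM01 : ∀ ω i, M ω i = 0 ∨ M ω i = 1)
    (p : Fin l → ℝ) (hp : ∀ i, p i ∈ Set.Ioc (0 : ℝ) 1)
    (hMindep : iIndepFun (m := fun _ : Fin l => (inferInstance : MeasurableSpace ℝ))
      (fun i ω => M ω i) P)
    (hindep : IndepFun (fun ω => (X ω, Ystar ω)) M P)
    (hMp : ∀ i, P {ω | M ω i = 1} = ENNReal.ofReal (p i))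
    (i : Fin l) :
    ∫ ω, Ystar ω i / (1 + ∑ j ∈ Finset.univ.erase i, Ystar ω j) ∂P
      ≤ ∫ ω, (M ω i * Ystar ω i / p i)
          / (1 + ∑ j ∈ Finset.univ.erase i, M ω j * Ystar ω j / p j) ∂P :=
  normalized_label_upper_bound_general P l X Ystar M hYstar hM hYstar01 hM01 p hp hMindep hindep hMp
    i
end
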